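/- arXiv:2309.16156 — 3 statements merged into one kernel-verified Lean document; each statement's English description precedes it below -/
import Mathlib

section
/- Let G₁ and G₂ be finite connected simple graphs with n₁ and n₂ vertices and distance matrices D₁, D₂, and suppose each Gᵢ has a nonnegative curvature, i.e., there exist entrywise nonnegative wᵢ with Dᵢwᵢ = nᵢ·𝟏. Let G be the graph obtained by adding an edge e = {u,v} between G₁ and G₂, where u ∈ V(G₁) and v ∈ V(G₂). Then G has a curvature w (i.e., D_G w = (n₁+n₂)·𝟏, where D_G is the distance matrix of G) which is nonpositive at u and at v and nonnegative at every other vertex. -/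
/-- The graph obtained by adding an edge between the vertex `u` of `G₁` and the
vertex `v` of `G₂` (the graphs being on disjoint vertex sets). -/
def bridgeGraph {V₁ V₂ : Type*} (G₁ : SimpleGraph V₁) (G₂ : SimpleGraph V₂)
    (u : V₁) (v : V₂) : SimpleGraph (V₁ ⊕ V₂) :=
  SimpleGraph.fromRel (fun x y =>
    (∃ a b, x = Sum.inl a ∧ y = Sum.inl b ∧ G₁.Adj a b) ∨
    (∃ a b, x = Sum.inr a ∧ y = Sum.inr b ∧ G₂.Adj a b) ∨
    (x = Sum.inl u ∧ y = Sum.inr v))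

/-!
In the bridged graph the distance between `a ∈ V₁` and `b ∈ V₂` is `d₁(a,u) + 1 + d₂(v,b)`.
For a nonnegative curvature `wᵢ` of `Gᵢ` with total mass `sᵢ`, put `x₁ = (2/s₁) w₁ - δ_u` and
`x₂ = (2/s₂) w₂ - δ_v`. Both have total mass `1`, so in the row of `a ∈ V₁` the term
`-d₁(a,u)` coming from `δ_u` cancels against `(d₁(a,u) + 1) · ∑ x₂`, and every row of
`D_G (x₁, x₂)` equals `2n₁/s₁ + 2n₂/s₂ + 1 > 0`; rescaling gives the curvature. It is
nonpositive at `u` because a nonnegative curvature carries at most half of its mass at any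
vertex: the rows of `u` and of a neighbour of `u` agree, and their entries differ by at most
`1`, by exactly `-1` at `u` itself.
-/

open Matrix Finset

namespace SimpleGraph

variable {V : Type*} {G : SimpleGraph V}

lemma Adj.dist_le_dist_add_one {a c : V} (h : G.Adj a c) (b : V) :
    G.dist a b ≤ G.dist c b + 1 := by
  have := h.reachable.dist_triangle_left b
  rw [dist_eq_one_iff_adj.mpr h] at this
  omega

lemma Walk.le_add_length {f : V → ℕ} (hf : ∀ ⦃x z⦄, G.Adj x z → f x ≤ f z + 1) {x y : V}
    (p : G.Walk x y) : f x ≤ f y + p.length := by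
  induction p with
  | nil => simp
  | cons h _ ih => have := hf h; rw [Walk.length_cons]; omega

lemma Reachable.le_add_dist {f : V → ℕ} (hf : ∀ ⦃x z⦄, G.Adj x z → f x ≤ f z + 1) {x y : V}
    (h : G.Reachable x y) : f x ≤ f y + G.dist x y := by
  obtain ⟨p, hp⟩ := h.exists_walk_length_eq_dist
  exact hp ▸ p.le_add_length hf

variable (G) in
noncomputable def distMatrix : Matrix V V ℝ := of fun a b => (G.dist a b : ℝ)

lemma distMatrix_mulVec_apply [Fintype V] (w : V → ℝ) (a : V) :
    (G.distMatrix *ᵥ w) a = ∑ i, (G.dist a i : ℝ) * w i := rfl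

lemma two_mul_le_sum_of_adj [Fintype V] {w : V → ℝ} (hw0 : ∀ i, 0 ≤ w i) {u a : V}
    (hadj : G.Adj u a) (h : (G.distMatrix *ᵥ w) u = (G.distMatrix *ᵥ w) a) :
    2 * w u ≤ ∑ i, w i := by
  classical
  have termwise : ∀ i, (G.dist u i : ℝ) * w i + (Pi.single u (2 * w u) : V → ℝ) i
      ≤ (G.dist a i : ℝ) * w i + w i := by
    intro i
    rcases eq_or_ne i u with rfl | hi
    · simp only [dist_self, Nat.cast_zero, zero_mul, zero_add, Pi.single_eq_same,
        dist_eq_one_iff_adj.mpr hadj.symm, Nat.cast_one, one_mul]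
      linarith
    · have : (G.dist u i : ℝ) ≤ G.dist a i + 1 := by exact_mod_cast hadj.dist_le_dist_add_one i
      simp only [Pi.single_eq_of_ne hi, add_zero]
      nlinarith [hw0 i]
  have := sum_le_sum (s := univ) fun i _ => termwise i
  simp only [sum_add_distrib, sum_pi_single', mem_univ, if_true] at this
  rw [distMatrix_mulVec_apply, distMatrix_mulVec_apply] at h
  linarith

variable [Fintype V]

variable (G) in
def IsCurvature (w : V → ℝ) : Prop :=
  G.distMatrix *ᵥ w = fun _ => (Fintype.card V : ℝ)

lemma IsCurvature.exists_adj (hG : G.Connected) {w : V → ℝ} (hw : G.IsCurvature w) (u : V) :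
    ∃ a, G.Adj u a := by
  have : Nonempty V := hG.nonempty
  have : Nontrivial V := by
    by_contra hV
    rw [not_nontrivial_iff_subsingleton] at hV
    have h0 : ∀ i, G.dist u i = 0 := fun i => by rw [Subsingleton.elim i u, dist_self]
    have := congrFun hw u
    simp [distMatrix_mulVec_apply, h0, eq_comm, Fintype.card_ne_zero] at this
  exact hG.preconnected.exists_adj_of_nontrivial u

lemma IsCurvature.two_mul_le_sum (hG : G.Connected) {w : V → ℝ} (hw : G.IsCurvature w)
    (hw0 : ∀ i, 0 ≤ w i) (u : V) : 2 * w u ≤ ∑ i, w i := by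
  obtain ⟨a, hadj⟩ := hw.exists_adj hG u
  exact two_mul_le_sum_of_adj hw0 hadj (by rw [hw])

lemma IsCurvature.sum_pos (hG : G.Connected) {w : V → ℝ} (hw : G.IsCurvature w)
    (hw0 : ∀ i, 0 ≤ w i) : 0 < ∑ i, w i := by
  have : Nonempty V := hG.nonempty
  refine (sum_nonneg fun i _ => hw0 i).lt_of_ne fun hs => ?_
  have hw_zero : w = 0 := funext fun i =>
    (sum_eq_zero_iff_of_nonneg fun i _ => hw0 i).mp hs.symm i (mem_univ i)
  have := congrFun hw (Classical.arbitrary V)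
  simp [hw_zero, eq_comm, Fintype.card_ne_zero] at this

end SimpleGraph

section Bridge

open SimpleGraph

variable {V₁ V₂ : Type*} {G₁ : SimpleGraph V₁} {G₂ : SimpleGraph V₂} {u : V₁} {v : V₂}

@[simp]
lemma bridgeGraph_adj_inl_inl {a b : V₁} :
    (bridgeGraph G₁ G₂ u v).Adj (.inl a) (.inl b) ↔ G₁.Adj a b := by
  simpa [bridgeGraph, G₁.adj_comm b a] using Adj.ne

@[simp]
lemma bridgeGraph_adj_inr_inr {a b : V₂} :
    (bridgeGraph G₁ G₂ u v).Adj (.inr a) (.inr b) ↔ G₂.Adj a b := by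
  simpa [bridgeGraph, G₂.adj_comm b a] using Adj.ne

@[simp]
lemma bridgeGraph_adj_inl_inr {a : V₁} {b : V₂} :
    (bridgeGraph G₁ G₂ u v).Adj (.inl a) (.inr b) ↔ a = u ∧ b = v := by
  simp [bridgeGraph]

@[simp]
lemma bridgeGraph_adj_inr_inl {a : V₁} {b : V₂} :
    (bridgeGraph G₁ G₂ u v).Adj (.inr b) (.inl a) ↔ a = u ∧ b = v := by
  rw [adj_comm, bridgeGraph_adj_inl_inr]

variable (G₁ G₂ u v)

abbrev bridgeGraph.inlHom : G₁ →g bridgeGraph G₁ G₂ u v :=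
  ⟨Sum.inl, bridgeGraph_adj_inl_inl.mpr⟩

abbrev bridgeGraph.inrHom : G₂ →g bridgeGraph G₁ G₂ u v :=
  ⟨Sum.inr, bridgeGraph_adj_inr_inr.mpr⟩

noncomputable def bridgeDist : V₁ ⊕ V₂ → V₁ ⊕ V₂ → ℕ
  | .inl a, .inl b => G₁.dist a b
  | .inl a, .inr b => G₁.dist a u + 1 + G₂.dist v b
  | .inr a, .inl b => G₂.dist a v + 1 + G₁.dist u b
  | .inr a, .inr b => G₂.dist a b

variable {G₁ G₂ u v}

lemma bridgeDist_le_add_one {x z : V₁ ⊕ V₂} (h : (bridgeGraph G₁ G₂ u v).Adj x z)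
    (y : V₁ ⊕ V₂) : bridgeDist G₁ G₂ u v x y ≤ bridgeDist G₁ G₂ u v z y + 1 := by
  rcases x with a | a <;> rcases z with c | c
  · have h := bridgeGraph_adj_inl_inl.mp h
    cases y with
    | inl b => exact h.dist_le_dist_add_one b
    | inr b => have := h.dist_le_dist_add_one u; simp only [bridgeDist]; omega
  · obtain ⟨rfl, rfl⟩ := bridgeGraph_adj_inl_inr.mp h
    cases y <;> simp only [bridgeDist, dist_self] <;> omega
  · obtain ⟨rfl, rfl⟩ := bridgeGraph_adj_inr_inl.mp h
    cases y <;> simp only [bridgeDist, dist_self] <;> omega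
  · have h := bridgeGraph_adj_inr_inr.mp h
    cases y with
    | inl b => have := h.dist_le_dist_add_one v; simp only [bridgeDist]; omega
    | inr b => exact h.dist_le_dist_add_one b

lemma exists_walk_length_eq_bridgeDist (hG₁ : G₁.Connected) (hG₂ : G₂.Connected)
    (x y : V₁ ⊕ V₂) :
    ∃ p : (bridgeGraph G₁ G₂ u v).Walk x y, p.length = bridgeDist G₁ G₂ u v x y := by
  have inl_inr (a : V₁) (b : V₂) : ∃ p : (bridgeGraph G₁ G₂ u v).Walk (.inl a) (.inr b),
      p.length = G₁.dist a u + 1 + G₂.dist v b := by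
    obtain ⟨p, hp⟩ := hG₁.exists_walk_length_eq_dist a u
    obtain ⟨q, hq⟩ := hG₂.exists_walk_length_eq_dist v b
    refine ⟨(p.map (bridgeGraph.inlHom G₁ G₂ u v)).append
      (.cons (bridgeGraph_adj_inl_inr.mpr ⟨rfl, rfl⟩) (q.map (bridgeGraph.inrHom G₁ G₂ u v))), ?_⟩
    rw [Walk.length_append, Walk.length_cons, Walk.length_map, Walk.length_map, hp, hq]
    omega
  rcases x with a | a <;> rcases y with b | b
  · obtain ⟨p, hp⟩ := hG₁.exists_walk_length_eq_dist a b
    exact ⟨p.map (bridgeGraph.inlHom G₁ G₂ u v), by rw [Walk.length_map, hp]; rfl⟩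
  · exact inl_inr a b
  · obtain ⟨p, hp⟩ := inl_inr b a
    refine ⟨p.reverse, ?_⟩
    rw [Walk.length_reverse, hp, G₁.dist_comm, G₂.dist_comm]
    simp only [bridgeDist]
    omega
  · obtain ⟨p, hp⟩ := hG₂.exists_walk_length_eq_dist a b
    exact ⟨p.map (bridgeGraph.inrHom G₁ G₂ u v), by rw [Walk.length_map, hp]; rfl⟩

lemma bridgeGraph_dist (hG₁ : G₁.Connected) (hG₂ : G₂.Connected) (x y : V₁ ⊕ V₂) :
    (bridgeGraph G₁ G₂ u v).dist x y = bridgeDist G₁ G₂ u v x y := by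
  obtain ⟨p, hp⟩ := exists_walk_length_eq_bridgeDist hG₁ hG₂ x y
  refine le_antisymm (hp ▸ dist_le p) ?_
  have := Reachable.le_add_dist (fun _ _ h => bridgeDist_le_add_one h y) ⟨p⟩
  cases y <;> simpa [bridgeDist] using this

variable [Fintype V₁] [Fintype V₂]

lemma bridgeGraph_distMatrix_mulVec_inl (hG₁ : G₁.Connected) (hG₂ : G₂.Connected)
    (x₁ : V₁ → ℝ) (x₂ : V₂ → ℝ) (a : V₁) :
    ((bridgeGraph G₁ G₂ u v).distMatrix *ᵥ Sum.elim x₁ x₂) (.inl a)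
      = (G₁.distMatrix *ᵥ x₁) a + (G₁.dist a u + 1) * ∑ j, x₂ j + (G₂.distMatrix *ᵥ x₂) v := by
  simp only [distMatrix_mulVec_apply, Fintype.sum_sum_type, Sum.elim_inl, Sum.elim_inr,
    bridgeGraph_dist hG₁ hG₂, bridgeDist, Nat.cast_add, Nat.cast_one, add_mul, sum_add_distrib,
    ← mul_sum]
  ring

lemma bridgeGraph_distMatrix_mulVec_inr (hG₁ : G₁.Connected) (hG₂ : G₂.Connected)
    (x₁ : V₁ → ℝ) (x₂ : V₂ → ℝ) (b : V₂) :
    ((bridgeGraph G₁ G₂ u v).distMatrix *ᵥ Sum.elim x₁ x₂) (.inr b)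
      = (G₂.distMatrix *ᵥ x₂) b + (G₂.dist b v + 1) * ∑ i, x₁ i + (G₁.distMatrix *ᵥ x₁) u := by
  simp only [distMatrix_mulVec_apply, Fintype.sum_sum_type, Sum.elim_inl, Sum.elim_inr,
    bridgeGraph_dist hG₁ hG₂, bridgeDist, Nat.cast_add, Nat.cast_one, add_mul, sum_add_distrib,
    ← mul_sum]
  ring

end Bridge

section BridgeWeight

open SimpleGraph

variable {V : Type*} [Fintype V] [DecidableEq V]

noncomputable def bridgeWeight (w : V → ℝ) (u : V) : V → ℝ :=
  (2 / ∑ i, w i) • w - Pi.single u 1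

lemma sum_bridgeWeight {w : V → ℝ} (hs : ∑ i, w i ≠ 0) (u : V) :
    ∑ i, bridgeWeight w u i = 1 := by
  simp only [bridgeWeight, Pi.sub_apply, Pi.smul_apply, smul_eq_mul, sum_sub_distrib, ← mul_sum,
    sum_pi_single', mem_univ, if_true]
  field_simp
  norm_num

lemma bridgeWeight_nonneg {w : V → ℝ} (hw0 : ∀ i, 0 ≤ w i) {u i : V} (hi : i ≠ u) :
    0 ≤ bridgeWeight w u i := by
  simp only [bridgeWeight, Pi.sub_apply, Pi.smul_apply, smul_eq_mul, Pi.single_eq_of_ne hi,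
    sub_zero]
  exact mul_nonneg (div_nonneg zero_le_two (sum_nonneg fun j _ => hw0 j)) (hw0 i)

namespace SimpleGraph.IsCurvature

variable {G : SimpleGraph V} {w : V → ℝ}

lemma distMatrix_mulVec_bridgeWeight (hw : G.IsCurvature w) (u : V) :
    G.distMatrix *ᵥ bridgeWeight w u
      = fun a => 2 * Fintype.card V / ∑ i, w i - G.dist a u := by
  rw [bridgeWeight, mulVec_sub, mulVec_smul, hw, mulVec_single_one]
  ext a
  simp only [Pi.sub_apply, Pi.smul_apply, smul_eq_mul, col_apply, distMatrix, of_apply]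
  ring

lemma bridgeWeight_self_nonpos (hG : G.Connected) (hw : G.IsCurvature w) (hw0 : ∀ i, 0 ≤ w i)
    (u : V) : bridgeWeight w u u ≤ 0 := by
  have hs := hw.sum_pos hG hw0
  have := hw.two_mul_le_sum hG hw0 u
  simp only [bridgeWeight, Pi.sub_apply, Pi.smul_apply, smul_eq_mul, Pi.single_eq_same,
    sub_nonpos, div_mul_eq_mul_div]
  rwa [div_le_one hs]

end SimpleGraph.IsCurvature

end BridgeWeight

open SimpleGraph in
lemma bridgeGraph_distMatrix_mulVec_bridgeWeight {V₁ V₂ : Type*} [Fintype V₁] [Fintype V₂]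
    [DecidableEq V₁] [DecidableEq V₂] {G₁ : SimpleGraph V₁} {G₂ : SimpleGraph V₂}
    (hG₁ : G₁.Connected) (hG₂ : G₂.Connected) {w₁ : V₁ → ℝ} {w₂ : V₂ → ℝ}
    (hw₁ : G₁.IsCurvature w₁) (hw₂ : G₂.IsCurvature w₂) (hw₁0 : ∀ i, 0 ≤ w₁ i)
    (hw₂0 : ∀ i, 0 ≤ w₂ i) (u : V₁) (v : V₂) :
    (bridgeGraph G₁ G₂ u v).distMatrix *ᵥ Sum.elim (bridgeWeight w₁ u) (bridgeWeight w₂ v)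
      = fun _ => 2 * Fintype.card V₁ / ∑ i, w₁ i + 2 * Fintype.card V₂ / ∑ j, w₂ j + 1 := by
  have hs₁ := sum_bridgeWeight (hw₁.sum_pos hG₁ hw₁0).ne' u
  have hs₂ := sum_bridgeWeight (hw₂.sum_pos hG₂ hw₂0).ne' v
  ext (a | b)
  · rw [bridgeGraph_distMatrix_mulVec_inl hG₁ hG₂, hw₁.distMatrix_mulVec_bridgeWeight,
      hw₂.distMatrix_mulVec_bridgeWeight, hs₂]
    simp only [dist_self, Nat.cast_zero]
    ring
  · rw [bridgeGraph_distMatrix_mulVec_inr hG₁ hG₂, hw₁.distMatrix_mulVec_bridgeWeight,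
      hw₂.distMatrix_mulVec_bridgeWeight, hs₁]
    simp only [dist_self, Nat.cast_zero]
    ring

/-- If `G₁`, `G₂` are finite connected simple graphs with nonnegative
curvatures, then the graph obtained by adding an edge `{u,v}` between them has a
curvature which is nonpositive at `u` and `v` and nonnegative at every other vertex. -/
theorem stmt_4 {V₁ V₂ : Type*} [Fintype V₁] [Fintype V₂]
    (G₁ : SimpleGraph V₁) (G₂ : SimpleGraph V₂)
    (hG₁ : G₁.Connected) (hG₂ : G₂.Connected)
    (D₁ : Matrix V₁ V₁ ℝ) (hD₁ : ∀ a b, D₁ a b = (G₁.dist a b : ℝ))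
    (D₂ : Matrix V₂ V₂ ℝ) (hD₂ : ∀ a b, D₂ a b = (G₂.dist a b : ℝ))
    (w₁ : V₁ → ℝ) (hw₁0 : ∀ i, 0 ≤ w₁ i)
    (hw₁ : D₁.mulVec w₁ = fun _ => (Fintype.card V₁ : ℝ))
    (w₂ : V₂ → ℝ) (hw₂0 : ∀ i, 0 ≤ w₂ i)
    (hw₂ : D₂.mulVec w₂ = fun _ => (Fintype.card V₂ : ℝ))
    (u : V₁) (v : V₂) :
    ∃ w : V₁ ⊕ V₂ → ℝ,
      (Matrix.of fun a b => ((bridgeGraph G₁ G₂ u v).dist a b : ℝ)).mulVec w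
          = (fun _ => ((Fintype.card V₁ : ℝ) + (Fintype.card V₂ : ℝ))) ∧
        w (Sum.inl u) ≤ 0 ∧ w (Sum.inr v) ≤ 0 ∧
        ∀ x, x ≠ Sum.inl u → x ≠ Sum.inr v → 0 ≤ w x := by
  classical
  obtain rfl : D₁ = G₁.distMatrix := Matrix.ext hD₁
  obtain rfl : D₂ = G₂.distMatrix := Matrix.ext hD₂
  replace hw₁ : G₁.IsCurvature w₁ := hw₁
  replace hw₂ : G₂.IsCurvature w₂ := hw₂
  set κ := 2 * Fintype.card V₁ / ∑ i, w₁ i + 2 * Fintype.card V₂ / ∑ j, w₂ j + 1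
  have hκ : 0 < κ := by
    have := hw₁.sum_pos hG₁ hw₁0
    have := hw₂.sum_pos hG₂ hw₂0
    positivity
  have hc : 0 ≤ (Fintype.card V₁ + Fintype.card V₂ : ℝ) / κ := by positivity
  refine ⟨((Fintype.card V₁ + Fintype.card V₂ : ℝ) / κ) •
    Sum.elim (bridgeWeight w₁ u) (bridgeWeight w₂ v), ?_, ?_, ?_, ?_⟩
  · change (bridgeGraph G₁ G₂ u v).distMatrix *ᵥ _ = _
    rw [mulVec_smul, bridgeGraph_distMatrix_mulVec_bridgeWeight hG₁ hG₂ hw₁ hw₂ hw₁0 hw₂0]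
    ext
    exact div_mul_cancel₀ _ hκ.ne'
  · exact mul_nonpos_of_nonneg_of_nonpos hc (hw₁.bridgeWeight_self_nonpos hG₁ hw₁0 u)
  · exact mul_nonpos_of_nonneg_of_nonpos hc (hw₂.bridgeWeight_self_nonpos hG₂ hw₂0 v)
  · rintro (i | j) hi hj
    · exact mul_nonneg hc (bridgeWeight_nonneg hw₁0 (by simpa using hi))
    · exact mul_nonneg hc (bridgeWeight_nonneg hw₂0 (by simpa using hj))
end

section
/- Let G₁ and G₂ be finite connected simple graphs with distance matrices D₁ and D₂ such that neither of the linear systems D₁x = 𝟏 and D₂x = 𝟏 has a solution. Let H be the graph obtained by adding an edge between a vertex u of G₁ and a vertex v of G₂ and then contracting this edge (identifying u and v), and let D_H be the distance matrix of H. Then the linear system D_H x = 𝟏 has no solution. -/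
/-!
The merged graph `H` is the cross `V₁ × {v} ∪ {u} × V₂` inside the box product `G₁ □ G₂`,
and it sits there isometrically: `d_H(p, q) = d₁(π₁ p, π₁ q) + d₂(π₂ p, π₂ q)` for the
projections `π₁ = toLeft u v` and `π₂ = toRight v`. Hence
`D_H = D₁.submatrix π₁ π₁ + D₂.submatrix π₂ π₂`, and a solution of `D_H x = 𝟏` pushed forward
along `π₁` and `π₂` gives `D₁ y = c₁ 𝟏` and `D₂ z = c₂ 𝟏`, where `c₁ + c₂ = 1` is the row of
the merged vertex. One of `c₁, c₂` is nonzero, and rescaling the corresponding vector solves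
`D₁ x = 𝟏` or `D₂ x = 𝟏`.
-/

/-- The graph obtained by merging `G₁` and `G₂` at a vertex: add an edge between
`u ∈ V(G₁)` and `v ∈ V(G₂)` and contract it, identifying `u` and `v`.  The merged
vertex is represented by `Sum.inl u`. -/
def mergeGraph {V₁ V₂ : Type*} (G₁ : SimpleGraph V₁) (G₂ : SimpleGraph V₂)
    (u : V₁) (v : V₂) : SimpleGraph (V₁ ⊕ {y : V₂ // y ≠ v}) :=
  SimpleGraph.fromRel (fun x y =>
    (∃ a b, x = Sum.inl a ∧ y = Sum.inl b ∧ G₁.Adj a b) ∨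
    (∃ a b, x = Sum.inr a ∧ y = Sum.inr b ∧ G₂.Adj a.1 b.1) ∨
    (∃ b, x = Sum.inl u ∧ y = Sum.inr b ∧ G₂.Adj v b.1))

open SimpleGraph Sum Matrix

theorem SimpleGraph.Hom.edist_le {V W : Type*} {G : SimpleGraph V} {G' : SimpleGraph W}
    (f : G →g G') (x y : V) : G'.edist (f x) (f y) ≤ G.edist x y := by
  by_cases h : G.Reachable x y
  · obtain ⟨p, hp⟩ := h.exists_walk_length_eq_edist
    calc G'.edist (f x) (f y) ≤ (p.map f).length := SimpleGraph.edist_le _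
      _ = G.edist x y := by rw [Walk.length_map, hp]
  · rw [edist_eq_top_of_not_reachable h]
    exact le_top

theorem Matrix.submatrix_mulVec_eq_mulVec_comp {l m m' n R : Type*} [Fintype m] [Fintype n]
    [DecidableEq n] [NonUnitalNonAssocSemiring R]
    (A : Matrix l n R) (g : m' → l) (f : m → n) (x : m → R) :
    A.submatrix g f *ᵥ x = (A *ᵥ fun j => ∑ k with f k = j, x k) ∘ g := by
  ext i
  simp only [mulVec, dotProduct, submatrix_apply, Function.comp_apply, Finset.mul_sum]
  rw [← Finset.sum_fiberwise Finset.univ f]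
  refine Finset.sum_congr rfl fun j _ => Finset.sum_congr rfl fun k hk => ?_
  rw [(Finset.mem_filter.mp hk).2]

theorem Matrix.exists_mulVec_eq_one_of_mulVec_eq_smul_one {n K : Type*} [Fintype n] [Field K]
    {A : Matrix n n K} {y : n → K} {c : K} (hc : c ≠ 0) (hy : A *ᵥ y = c • 1) :
    ∃ z, A *ᵥ z = 1 :=
  ⟨c⁻¹ • y, by rw [mulVec_smul, hy, smul_smul, inv_mul_cancel₀ hc, one_smul]⟩

theorem Matrix.exists_mulVec_eq_one_or_of_add_submatrix {W V₁ V₂ K : Type*} [Fintype W]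
    [Fintype V₁] [Fintype V₂] [DecidableEq V₁] [DecidableEq V₂] [Field K]
    (D₁ : Matrix V₁ V₁ K) (D₂ : Matrix V₂ V₂ K) (π₁ : W → V₁) (π₂ : W → V₂) (u : V₁) (v : V₂)
    (hu : ∀ a, ∃ p, π₁ p = a ∧ π₂ p = v) (hv : ∀ b, ∃ p, π₁ p = u ∧ π₂ p = b) {x : W → K}
    (hx : (D₁.submatrix π₁ π₁ + D₂.submatrix π₂ π₂) *ᵥ x = 1) :
    (∃ y, D₁ *ᵥ y = 1) ∨ ∃ z, D₂ *ᵥ z = 1 := by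
  set y₁ := D₁ *ᵥ fun a => ∑ k with π₁ k = a, x k
  set y₂ := D₂ *ᵥ fun b => ∑ k with π₂ k = b, x k
  have hrow (p : W) : y₁ (π₁ p) + y₂ (π₂ p) = 1 := by
    simpa [add_mulVec, submatrix_mulVec_eq_mulVec_comp] using congrFun hx p
  have hsum : y₁ u + y₂ v = 1 := by
    obtain ⟨p, hp₁, hp₂⟩ := hu u
    rw [← hp₁, ← hp₂, hrow]
  have hy₁ : y₁ = y₁ u • 1 := funext fun a => by
    obtain ⟨p, rfl, hp⟩ := hu a
    simpa [← hp] using (hrow p).trans hsum.symm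
  have hy₂ : y₂ = y₂ v • 1 := funext fun b => by
    obtain ⟨p, hp, rfl⟩ := hv b
    simpa [← hp] using (hrow p).trans hsum.symm
  by_cases hc : y₁ u = 0
  · have hc₂ : y₂ v = 1 := by rwa [hc, zero_add] at hsum
    exact .inr (exists_mulVec_eq_one_of_mulVec_eq_smul_one (hc₂ ▸ one_ne_zero) hy₂)
  · exact .inl (exists_mulVec_eq_one_of_mulVec_eq_smul_one hc hy₁)

namespace mergeGraph

variable {V₁ V₂ : Type*} (G₁ : SimpleGraph V₁) (G₂ : SimpleGraph V₂) (u : V₁) (v : V₂)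

def toLeft : V₁ ⊕ {y : V₂ // y ≠ v} → V₁ := Sum.elim id fun _ => u

def toRight : V₁ ⊕ {y : V₂ // y ≠ v} → V₂ := Sum.elim (fun _ => v) Subtype.val

@[simps]
def toBoxProd : mergeGraph G₁ G₂ u v →g G₁ □ G₂ where
  toFun p := (toLeft u v p, toRight v p)
  map_rel' := by
    have h {p q} (hpq : (∃ a b, p = inl a ∧ q = inl b ∧ G₁.Adj a b) ∨
        (∃ a b, p = inr a ∧ q = inr b ∧ G₂.Adj a.1 b.1) ∨
        (∃ b, p = inl u ∧ q = inr b ∧ G₂.Adj v b.1)) :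
        (G₁ □ G₂).Adj (toLeft u v p, toRight v p) (toLeft u v q, toRight v q) := by
      rcases hpq with ⟨a, b, rfl, rfl, hab⟩ | ⟨a, b, rfl, rfl, hab⟩ | ⟨b, rfl, rfl, hb⟩ <;>
        simp [toLeft, toRight, boxProd_adj, *]
    rintro p q ⟨-, hpq | hqp⟩
    exacts [h hpq, (h hqp).symm]

@[simps]
def ofLeft : G₁ →g mergeGraph G₁ G₂ u v where
  toFun := inl
  map_rel' {a b} hab := by
    rw [mergeGraph, fromRel_adj]
    exact ⟨by simp [hab.ne], .inl (.inl ⟨a, b, rfl, rfl, hab⟩)⟩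

variable [DecidableEq V₂]

def ofRight : G₂ →g mergeGraph G₁ G₂ u v where
  toFun b := if h : b = v then inl u else inr ⟨b, h⟩
  map_rel' {a b} hab := by
    rw [mergeGraph, fromRel_adj]
    by_cases ha : a = v <;> by_cases hb : b = v
    · exact absurd (ha ▸ hb ▸ hab) (G₂.irrefl)
    · subst ha
      simp only [dif_neg hb]
      exact ⟨by simp, .inl (.inr (.inr ⟨⟨b, hb⟩, rfl, rfl, hab⟩))⟩
    · subst hb
      simp only [dif_neg ha]
      exact ⟨by simp, .inr (.inr (.inr ⟨⟨a, ha⟩, rfl, rfl, hab.symm⟩))⟩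
    · simp only [dif_neg ha, dif_neg hb]
      exact ⟨by simp [Subtype.ext_iff, hab.ne],
        .inl (.inr (.inl ⟨⟨a, ha⟩, ⟨b, hb⟩, rfl, rfl, hab⟩))⟩

variable {G₁ G₂ u v}

@[simp] theorem ofRight_self : ofRight G₁ G₂ u v v = inl u := dif_pos rfl

@[simp] theorem ofRight_val (b : {y : V₂ // y ≠ v}) :
    ofRight G₁ G₂ u v b = inr b := dif_neg b.2

@[simp] theorem toLeft_ofRight (b : V₂) :
    toLeft u v (ofRight G₁ G₂ u v b) = u := by
  by_cases h : b = v
  · subst h; simp [toLeft]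
  · simp [ofRight, toLeft, h]

@[simp] theorem toRight_ofRight (b : V₂) :
    toRight v (ofRight G₁ G₂ u v b) = b := by
  by_cases h : b = v
  · subst h; simp [toRight]
  · simp [ofRight, toRight, h]

theorem edist_inl_inr_le (a : V₁) (b : {y : V₂ // y ≠ v}) :
    (mergeGraph G₁ G₂ u v).edist (inl a) (inr b) ≤ G₁.edist a u + G₂.edist v b := by
  calc (mergeGraph G₁ G₂ u v).edist (inl a) (inr b)
      ≤ (mergeGraph G₁ G₂ u v).edist (inl a) (inl u) +
          (mergeGraph G₁ G₂ u v).edist (inl u) (inr b) := SimpleGraph.edist_triangle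
    _ ≤ G₁.edist a u + G₂.edist v b := by
      gcongr
      · exact (ofLeft G₁ G₂ u v).edist_le a u
      · simpa using (ofRight G₁ G₂ u v).edist_le v b

theorem edist_eq (p q : V₁ ⊕ {y : V₂ // y ≠ v}) :
    (mergeGraph G₁ G₂ u v).edist p q =
      G₁.edist (toLeft u v p) (toLeft u v q) + G₂.edist (toRight v p) (toRight v q) := by
  refine le_antisymm ?_ (by simpa [edist_boxProd] using (toBoxProd G₁ G₂ u v).edist_le p q)
  rcases p with a | a <;> rcases q with b | b <;>
    simp only [toLeft, toRight, elim_inl, elim_inr, id]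
  · simpa using (ofLeft G₁ G₂ u v).edist_le a b
  · exact edist_inl_inr_le a b
  · simpa [SimpleGraph.edist_comm] using edist_inl_inr_le (G₂ := G₂) (u := u) b a
  · simpa using (ofRight G₁ G₂ u v).edist_le a b

theorem dist_eq (hG₁ : G₁.Connected) (hG₂ : G₂.Connected) (p q : V₁ ⊕ {y : V₂ // y ≠ v}) :
    (mergeGraph G₁ G₂ u v).dist p q =
      G₁.dist (toLeft u v p) (toLeft u v q) + G₂.dist (toRight v p) (toRight v q) := by
  have hfin : (mergeGraph G₁ G₂ u v).edist p q ≠ ⊤ := by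
    simp [edist_eq, edist_ne_top_iff_reachable, hG₁.preconnected _ _, hG₂.preconnected _ _]
  rw [← Nat.cast_inj (R := ℕ∞), Nat.cast_add, (reachable_of_edist_ne_top hfin).coe_dist_eq_edist,
    (hG₁ _ _).coe_dist_eq_edist, (hG₂ _ _).coe_dist_eq_edist, edist_eq]

end mergeGraph

open mergeGraph in
/-- If neither `D₁x = 𝟏` nor `D₂x = 𝟏` has a solution, then after merging
`G₁` and `G₂` at a vertex (adding the edge `{u,v}` and contracting it) the linear system
`D_H x = 𝟏` has no solution either. -/
theorem stmt_16 {V₁ V₂ : Type*} [Fintype V₁] [Fintype V₂] [DecidableEq V₂]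
    (G₁ : SimpleGraph V₁) (G₂ : SimpleGraph V₂)
    (hG₁ : G₁.Connected) (hG₂ : G₂.Connected)
    (D₁ : Matrix V₁ V₁ ℝ) (hD₁ : ∀ a b, D₁ a b = (G₁.dist a b : ℝ))
    (D₂ : Matrix V₂ V₂ ℝ) (hD₂ : ∀ a b, D₂ a b = (G₂.dist a b : ℝ))
    (h₁ : ¬ ∃ x : V₁ → ℝ, D₁.mulVec x = fun _ => (1 : ℝ))
    (h₂ : ¬ ∃ x : V₂ → ℝ, D₂.mulVec x = fun _ => (1 : ℝ))
    (u : V₁) (v : V₂) :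
    ¬ ∃ x : V₁ ⊕ {y : V₂ // y ≠ v} → ℝ,
      (Matrix.of fun a b => ((mergeGraph G₁ G₂ u v).dist a b : ℝ)).mulVec x
        = fun _ => (1 : ℝ) := by
  classical
  rintro ⟨x, hx⟩
  have hD : (Matrix.of fun a b => ((mergeGraph G₁ G₂ u v).dist a b : ℝ)) =
      D₁.submatrix (toLeft u v) (toLeft u v) + D₂.submatrix (toRight v) (toRight v) := by
    ext p q
    simp [dist_eq hG₁ hG₂, hD₁, hD₂]
  rw [hD] at hx
  rcases exists_mulVec_eq_one_or_of_add_submatrix D₁ D₂ _ _ u v (fun a => ⟨inl a, rfl, rfl⟩)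
    (fun b => ⟨ofRight G₁ G₂ u v b, by simp, by simp⟩) hx with h | h
  exacts [h₁ h, h₂ h]
end

section
/- Let T be the star graph on n ≥ 3 vertices (one center adjacent to n−1 leaves), with distance matrix D, Perron root λ, and entrywise nonnegative unit eigenvector η with Dη = λη и ‖η‖₂ = 1. Then ⟨η, 𝟏⟩² > n − 1. -/
/-- The star graph on `n` vertices: vertex `0` (the center) is adjacent to every other
vertex, and there are no further edges. -/
def starGraph (n : ℕ) : SimpleGraph (Fin n) :=
  SimpleGraph.fromRel (fun x _ => x.val = 0)

/-!
With `a = η 0` and `T = ∑ i, η i`, the center row of `D η = λ η` reads `T - a = λ a` and the row of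
a leaf `i` reads `(λ + 2) η i = 2 T - a`. Nonnegativity rules out `λ = -2` (it would give
`T = -a ≤ 0`), so all leaves carry one weight `t`. With `M = n - 1` this leaves
`T = a + M t`, `a² + M t² = 1`, `M t = λ a` and `a + 2 (M - 1) t = λ t`, whence
`T² - M = (2 λ + 1 - M) a²`; the leaf equation forces `λ > 2 (M - 1)`, so the factor is positive.
-/

open Finset Matrix

/-- `SimpleGraph.dist` is `0` between different components. -/
noncomputable def SimpleGraph.distMatrix_s18 {V : Type*} (G : SimpleGraph V) (R : Type*) [NatCast R] :
    Matrix V V R :=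
  Matrix.of fun i j => (G.dist i j : R)

section StarGraph

variable {n : ℕ} [NeZero n]

theorem starGraph_adj_iff {i j : Fin n} :
    (starGraph n).Adj i j ↔ i ≠ j ∧ (i = 0 ∨ j = 0) := by
  simp only [starGraph, SimpleGraph.fromRel_adj, ne_eq, Fin.ext_iff, Fin.val_zero]

theorem starGraph_adj_zero {i : Fin n} (hi : i ≠ 0) : (starGraph n).Adj i 0 :=
  starGraph_adj_iff.2 ⟨hi, .inr rfl⟩

theorem starGraph_dist_zero_left {i : Fin n} (hi : i ≠ 0) : (starGraph n).dist 0 i = 1 :=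
  SimpleGraph.dist_eq_one_iff_adj.2 (starGraph_adj_zero hi).symm

theorem starGraph_dist_zero_right {i : Fin n} (hi : i ≠ 0) : (starGraph n).dist i 0 = 1 :=
  SimpleGraph.dist_eq_one_iff_adj.2 (starGraph_adj_zero hi)

theorem starGraph_dist_of_ne_zero {i j : Fin n} (hi : i ≠ 0) (hj : j ≠ 0) (hij : i ≠ j) :
    (starGraph n).dist i j = 2 := by
  let p : (starGraph n).Walk i j :=
    .cons (starGraph_adj_zero hi) (.cons (starGraph_adj_zero hj).symm .nil)
  have hle : (starGraph n).dist i j ≤ 2 := SimpleGraph.dist_le p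
  have hne_zero : (starGraph n).dist i j ≠ 0 :=
    (SimpleGraph.Reachable.dist_eq_zero_iff ⟨p⟩).not.2 hij
  have hne_one : (starGraph n).dist i j ≠ 1 := by
    rw [Ne, SimpleGraph.dist_eq_one_iff_adj, starGraph_adj_iff]
    tauto
  omega

variable {R : Type*} [Ring R]

theorem starGraph_distMatrix_mulVec_zero (x : Fin n → R) :
    ((starGraph n).distMatrix_s18 R *ᵥ x) 0 = ∑ j, x j - x 0 := by
  have hrow : ∀ j, (starGraph n).distMatrix_s18 R 0 j * x j = x j - if j = 0 then x j else 0 := by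
    intro j
    by_cases hj : j = 0
    · simp [hj, SimpleGraph.distMatrix_s18]
    · simp [hj, SimpleGraph.distMatrix_s18, starGraph_dist_zero_left hj]
  simp only [mulVec, dotProduct, hrow, sum_sub_distrib, sum_ite_eq', mem_univ, if_true]

theorem starGraph_distMatrix_mulVec_of_ne_zero {i : Fin n} (hi : i ≠ 0) (x : Fin n → R) :
    ((starGraph n).distMatrix_s18 R *ᵥ x) i = 2 * ∑ j, x j - 2 * x i - x 0 := by
  have hrow : ∀ j, (starGraph n).distMatrix_s18 R i j * x j =
      2 * x j - (if j = i then 2 * x j else 0) - if j = 0 then x j else 0 := by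
    intro j
    by_cases hji : j = i
    · simp [hji, hi, SimpleGraph.distMatrix_s18]
    by_cases hj : j = 0
    · simp [hj, hi.symm, SimpleGraph.distMatrix_s18, starGraph_dist_zero_right hi, two_mul]
    · simp [hji, hj, SimpleGraph.distMatrix_s18, starGraph_dist_of_ne_zero hi hj (Ne.symm hji)]
  simp only [mulVec, dotProduct, hrow, sum_sub_distrib, ← mul_sum, sum_ite_eq', mem_univ, if_true]

theorem eq_of_starGraph_distMatrix_mulVec_eq [NoZeroDivisors R]
    {x : Fin n → R} {lam : R} (hx : (starGraph n).distMatrix_s18 R *ᵥ x = lam • x) (hlam : lam ≠ -2)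
    {i j : Fin n} (hi : i ≠ 0) (hj : j ≠ 0) : x i = x j := by
  have hleaf : ∀ k, k ≠ 0 → (lam + 2) * x k = 2 * ∑ l, x l - x 0 := by
    intro k hk
    have := congrFun hx k
    rw [starGraph_distMatrix_mulVec_of_ne_zero hk, Pi.smul_apply, smul_eq_mul] at this
    rw [add_mul, ← this]
    abel
  refine mul_left_cancel₀ (fun h ↦ hlam (eq_neg_of_add_eq_zero_left h)) ?_
  rw [hleaf i hi, hleaf j hj]

theorem starGraph_eigenvalue_ne_neg_two {x : Fin n → ℝ} {lam : ℝ} (hx0 : 0 ≤ x) (hx : x ≠ 0)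
    (hxeig : (starGraph n).distMatrix_s18 ℝ *ᵥ x = lam • x) : lam ≠ -2 := by
  rintro rfl
  have hsum_pos : 0 < ∑ j, x j := by
    obtain ⟨i, hi⟩ := Function.ne_iff.1 hx
    exact sum_pos' (fun j _ ↦ hx0 j) ⟨i, mem_univ i, (hx0 i).lt_of_ne' hi⟩
  have hcenter := congrFun hxeig 0
  rw [starGraph_distMatrix_mulVec_zero, Pi.smul_apply, smul_eq_mul] at hcenter
  linarith [show 0 ≤ x 0 from hx0 0]

end StarGraph

theorem lt_sq_of_star_eigen_equations {a t lam M : ℝ} (hM : 1 ≤ M) (ha : 0 ≤ a) (ht : 0 ≤ t)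
    (hnorm : a ^ 2 + M * t ^ 2 = 1) (hcenter : M * t = lam * a)
    (hleaf : a + 2 * (M - 1) * t = lam * t) : M < (a + M * t) ^ 2 := by
  have ha_pos : 0 < a := by
    refine ha.lt_of_ne' fun ha0 ↦ ?_
    have ht0 : t = 0 := by simpa [ha0, (by linarith : M ≠ 0)] using hcenter
    simp [ha0, ht0] at hnorm
  have ht_pos : 0 < t := ht.lt_of_ne' fun ht0 ↦ by simp [ht0] at hleaf; linarith
  have hlam : 2 * (M - 1) < lam := by nlinarith
  have hsq : (a + M * t) ^ 2 - M = (2 * lam + 1 - M) * a ^ 2 := by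
    linear_combination M * hnorm + 2 * a * hcenter
  nlinarith [mul_pos (by linarith : 0 < 2 * lam + 1 - M) (pow_pos ha_pos 2)]

theorem stmt_18_general (n : ℕ) (hn : 3 ≤ n)
    (D : Matrix (Fin n) (Fin n) ℝ) (hD : ∀ a b, D a b = ((starGraph n).dist a b : ℝ))
    (lam : ℝ) (η : Fin n → ℝ)
    (hη0 : ∀ i, 0 ≤ η i) (hηnorm : ∑ i, (η i) ^ 2 = 1)
    (hηeig : D.mulVec η = lam • η) :
    (∑ i, η i) ^ 2 > (n : ℝ) - 1 := by
  obtain ⟨m, rfl⟩ : ∃ m, n = m + 1 := ⟨n - 1, by omega⟩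
  have : NeZero m := ⟨by omega⟩
  obtain rfl : D = (starGraph (m + 1)).distMatrix_s18 ℝ := Matrix.ext hD
  have hlam : lam ≠ -2 :=
    starGraph_eigenvalue_ne_neg_two hη0 (by rintro rfl; simp at hηnorm) hηeig
  set t := η (0 : Fin m).succ
  have hleaves : ∀ i : Fin m, η i.succ = t := fun i ↦
    eq_of_starGraph_distMatrix_mulVec_eq hηeig hlam i.succ_ne_zero (Fin.succ_ne_zero 0)
  have hsum : ∑ i, η i = η 0 + m * t := by simp [Fin.sum_univ_succ, hleaves]
  have hcenter := congrFun hηeig 0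
  have hleaf := congrFun hηeig (0 : Fin m).succ
  rw [starGraph_distMatrix_mulVec_zero, Pi.smul_apply, smul_eq_mul, hsum] at hcenter
  rw [starGraph_distMatrix_mulVec_of_ne_zero (Fin.succ_ne_zero 0), Pi.smul_apply, smul_eq_mul,
    hsum] at hleaf
  rw [hsum, gt_iff_lt, Nat.cast_succ, add_sub_cancel_right]
  refine lt_sq_of_star_eigen_equations (by exact_mod_cast (by omega : 1 ≤ m)) (hη0 0) (hη0 _)
    (by simpa [Fin.sum_univ_succ, hleaves] using hηnorm) (by linarith) (by linarith)

/-- For the star graph on `n ≥ 3` vertices with distance matrix `D`,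
Perron root `λ` and entrywise nonnegative unit eigenvector `η`, one has
`⟨η,𝟏⟩² > n − 1`. -/
theorem stmt_18 (n : ℕ) (hn : 3 ≤ n)
    (D : Matrix (Fin n) (Fin n) ℝ) (hD : ∀ a b, D a b = ((starGraph n).dist a b : ℝ))
    (lam : ℝ) (η : Fin n → ℝ)
    (hη0 : ∀ i, 0 ≤ η i) (hηnorm : ∑ i, (η i) ^ 2 = 1)
    (hηeig : D.mulVec η = lam • η)
    (hmax : ∀ μ : ℝ, (∃ x : Fin n → ℝ, x ≠ 0 ∧ D.mulVec x = μ • x) → μ ≤ lam) :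
    (∑ i, η i) ^ 2 > (n : ℝ) - 1 :=
  stmt_18_general n hn D hD lam η hη0 hηnorm hηeig
end
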